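/- Let n ≥ 1, ε > 0, L > 0 and let v be an L-Lipschitz valuation on [0,1]. Let x, y ∈ [−1,1]^n with ∥x − y∥_∞ ≤ ε/(2nL), and write D(z) = v(I^+(z)) − v(I^-(z)). If D(x) ≥ 0 and D(y) ≤ 0, then 0 ≤ D(x) ≤ ε and −ε ≤ D(y) ≤ 0; in particular x encodes an ε-Consensus-Halving for the agent with valuation v. (Correctness kernel of the reduction from Consensus-Halving to Tucker.) -/

import Mathlib

/-!
Write `D(z) = v(I⁺(z)) − v(I⁻(z))`. Since `I⁻(x)` and `I⁻(y)` are the complements of `I⁺(x)` and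
`I⁺(y)` in `[0,1]`, they have the same symmetric difference, so `D(x) − D(y) ≤ 2L·λ(I⁺(x) △ I⁺(y))`.
A point `t > 0` is painted differently by `x` and `y` only if, for some `ℓ`, `t` lies between
`|x ℓ|` and `|y ℓ|`, or `x ℓ` and `y ℓ` have opposite signs and `t ≤ max |x ℓ| |y ℓ|`; either
way `t` lies in an interval of length at most `|x ℓ − y ℓ|`. Hence
`D(x) − D(y) ≤ 2Ln‖x − y‖ ≤ ε`, and `D(x) ≥ 0 ≥ D(y)` finishes the proof.
-/

open MeasureTheory Set

/-- A valuation `v` on `[0,1]` is `L`-Lipschitz if `|v A - v B| ≤ L · λ(A △ B)`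
for all Lebesgue-measurable `A, B ⊆ [0,1]`. -/
def LipVal (L : ℝ) (v : Set ℝ → ℝ) : Prop :=
  ∀ A B : Set ℝ, A ⊆ Icc (0:ℝ) 1 → B ⊆ Icc (0:ℝ) 1 → MeasurableSet A → MeasurableSet B →
    |v A - v B| ≤ L * (volume (symmDiff A B)).toReal

/-- The painting encoding `I⁺(x) ⊆ [0,1]` of a point `x ∈ [−1,1]^n`. -/
def paintPlus (n : ℕ) (x : Fin n → ℝ) : Set ℝ :=
  {t | t = 0 ∨ (0 < t ∧ t ≤ 1 ∧
    ((∀ ℓ : Fin n, |x ℓ| < t) ∨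
      ∃ ℓ : Fin n, t ≤ |x ℓ| ∧ 0 < x ℓ ∧ ∀ m : Fin n, ℓ < m → |x m| < t))}

theorem Set.diff_symmDiff_diff {α : Type*} {S A B : Set α} (hA : A ⊆ S) (hB : B ⊆ S) :
    symmDiff (S \ A) (S \ B) = symmDiff A B := by
  ext t
  have := @hA t
  have := @hB t
  simp only [mem_symmDiff, mem_sdiff]
  tauto

theorem LipVal.sub_compl_sub_sub_compl_le {L : ℝ} {v : Set ℝ → ℝ} (hv : LipVal L v)
    {A B : Set ℝ} (hA : A ⊆ Icc 0 1) (hB : B ⊆ Icc 0 1)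
    (hAm : MeasurableSet A) (hBm : MeasurableSet B) :
    (v A - v (Icc 0 1 \ A)) - (v B - v (Icc 0 1 \ B)) ≤
      2 * L * (volume (symmDiff A B)).toReal := by
  have hdiff := hv A B hA hB hAm hBm
  have hcompl := hv _ _ sdiff_subset sdiff_subset
    (measurableSet_Icc.diff hAm) (measurableSet_Icc.diff hBm)
  rw [diff_symmDiff_diff hA hB] at hcompl
  linarith [le_abs_self (v A - v B), neg_abs_le (v (Icc 0 1 \ A) - v (Icc 0 1 \ B))]

/-- Outside this interval the coordinates `a` and `b` paint every `t > 0` alike: either both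
`|a|, |b| < t`, or both reach `t` with the same sign. -/
def paintDisagreement (a b : ℝ) : Set ℝ :=
  Icc (if a * b ≤ 0 then 0 else min |a| |b|) (max |a| |b|)

theorem volume_paintDisagreement_le (a b : ℝ) :
    volume (paintDisagreement a b) ≤ ENNReal.ofReal |a - b| := by
  rw [paintDisagreement, Real.volume_Icc]
  refine ENNReal.ofReal_le_ofReal ?_
  split_ifs with hab
  · grind [abs_le, mul_nonpos_iff, max_le]
  · rw [max_sub_min_eq_abs]
    exact abs_abs_sub_abs_le_abs_sub b a |>.trans_eq (abs_sub_comm b a)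

theorem agree_of_notMem_paintDisagreement {a b t : ℝ} (ht : 0 < t)
    (h : t ∉ paintDisagreement a b) :
    (t ≤ |a| ↔ t ≤ |b|) ∧ (t ≤ |a| ∧ 0 < a ↔ t ≤ |b| ∧ 0 < b) := by
  simp only [paintDisagreement, mem_Icc, not_and_or, not_le, max_lt_iff] at h
  rcases h with hlo | ⟨ha, hb⟩
  · split_ifs at hlo with hab
    · exact absurd ht hlo.not_gt
    · rw [lt_min_iff] at hlo
      rcases pos_and_pos_or_neg_and_neg_of_mul_pos (not_le.mp hab) with ⟨ha, hb⟩ | ⟨ha, hb⟩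
      · simp [hlo.1.le, hlo.2.le, ha, hb]
      · simp [hlo.1.le, hlo.2.le, ha.not_gt, hb.not_gt]
  · simp [ha.not_ge, hb.not_ge]

section Painting

variable {n : ℕ} (x y : Fin n → ℝ)

theorem measurableSet_paintPlus : MeasurableSet (paintPlus n x) :=
  measurableSet_setOfPred.2 (by fun_prop)

theorem paintPlus_subset_Icc : paintPlus n x ⊆ Icc 0 1 := by
  rintro t (rfl | ⟨ht₀, ht₁, -⟩)
  · exact ⟨le_rfl, zero_le_one⟩
  · exact ⟨ht₀.le, ht₁⟩

theorem mem_paintPlus_iff {t : ℝ} (ht : 0 < t) :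
    t ∈ paintPlus n x ↔ t ≤ 1 ∧ ((∀ ℓ, ¬ t ≤ |x ℓ|) ∨
      ∃ ℓ, (t ≤ |x ℓ| ∧ 0 < x ℓ) ∧ ∀ m, ℓ < m → ¬ t ≤ |x m|) := by
  simp only [paintPlus, mem_ofPred_eq, ht.ne', ht, true_and, false_or, not_le, and_assoc]

theorem mem_paintPlus_congr {t : ℝ} (ht : 0 < t) (hreach : ∀ ℓ, t ≤ |x ℓ| ↔ t ≤ |y ℓ|)
    (hpos : ∀ ℓ, t ≤ |x ℓ| ∧ 0 < x ℓ ↔ t ≤ |y ℓ| ∧ 0 < y ℓ) :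
    t ∈ paintPlus n x ↔ t ∈ paintPlus n y := by
  simp_rw [mem_paintPlus_iff _ ht, hpos, hreach]


theorem symmDiff_paintPlus_subset :
    symmDiff (paintPlus n x) (paintPlus n y) ⊆ ⋃ ℓ, paintDisagreement (x ℓ) (y ℓ) := by
  intro t ht
  by_contra hnot
  simp only [mem_iUnion, not_exists] at hnot
  have ht₀ : 0 < t := by
    refine lt_of_le_of_ne ?_ ?_
    · rcases mem_symmDiff.mp ht with ⟨h, -⟩ | ⟨h, -⟩ <;> exact (paintPlus_subset_Icc _ h).1
    · rintro rfl
      simp [mem_symmDiff, paintPlus] at ht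
  have hagree ℓ := agree_of_notMem_paintDisagreement ht₀ (hnot ℓ)
  have := mem_paintPlus_congr x y ht₀ (fun ℓ => (hagree ℓ).1) (fun ℓ => (hagree ℓ).2)
  rcases mem_symmDiff.mp ht with ⟨hx, hy⟩ | ⟨hy, hx⟩ <;> tauto

theorem volume_symmDiff_paintPlus_le :
    volume (symmDiff (paintPlus n x) (paintPlus n y)) ≤ ENNReal.ofReal (∑ ℓ, |x ℓ - y ℓ|) :=
  calc volume (symmDiff (paintPlus n x) (paintPlus n y))
      ≤ volume (⋃ ℓ, paintDisagreement (x ℓ) (y ℓ)) := measure_mono (symmDiff_paintPlus_subset x y)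
    _ ≤ ∑ ℓ, volume (paintDisagreement (x ℓ) (y ℓ)) := measure_iUnion_fintype_le _ _
    _ ≤ ∑ ℓ, ENNReal.ofReal |x ℓ - y ℓ| :=
      Finset.sum_le_sum fun _ _ => volume_paintDisagreement_le _ _
    _ = ENNReal.ofReal (∑ ℓ, |x ℓ - y ℓ|) :=
      (ENNReal.ofReal_sum_of_nonneg fun _ _ => abs_nonneg _).symm

theorem toReal_volume_symmDiff_paintPlus_le :
    (volume (symmDiff (paintPlus n x) (paintPlus n y))).toReal ≤ n * ‖x - y‖ := by
  refine ENNReal.toReal_le_of_le_ofReal (by positivity) ?_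
  refine (volume_symmDiff_paintPlus_le x y).trans (ENNReal.ofReal_le_ofReal ?_)
  simpa using Finset.sum_le_card_nsmul Finset.univ (fun ℓ => |x ℓ - y ℓ|) ‖x - y‖
    fun ℓ _ => by simpa using norm_le_pi_norm (x - y) ℓ

end Painting

theorem stmt9_general (n : ℕ) (hn : 1 ≤ n) (ε L : ℝ) (hL : 0 < L)
    (v : Set ℝ → ℝ) (hv : LipVal L v)
    (x y : Fin n → ℝ)
    (hclose : ‖x - y‖ ≤ ε / (2 * (n : ℝ) * L))
    (hDx : 0 ≤ v (paintPlus n x) - v (Icc (0:ℝ) 1 \ paintPlus n x))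
    (hDy : v (paintPlus n y) - v (Icc (0:ℝ) 1 \ paintPlus n y) ≤ 0) :
    (0 ≤ v (paintPlus n x) - v (Icc (0:ℝ) 1 \ paintPlus n x) ∧
      v (paintPlus n x) - v (Icc (0:ℝ) 1 \ paintPlus n x) ≤ ε) ∧
    (-ε ≤ v (paintPlus n y) - v (Icc (0:ℝ) 1 \ paintPlus n y) ∧
      v (paintPlus n y) - v (Icc (0:ℝ) 1 \ paintPlus n y) ≤ 0) := by
  have hgap := hv.sub_compl_sub_sub_compl_le (paintPlus_subset_Icc x) (paintPlus_subset_Icc y)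
    (measurableSet_paintPlus x) (measurableSet_paintPlus y)
  have hgap_le_ε : 2 * L * (volume (symmDiff (paintPlus n x) (paintPlus n y))).toReal ≤ ε :=
    calc _ ≤ 2 * L * (n * ‖x - y‖) := by
          gcongr; exact toReal_volume_symmDiff_paintPlus_le x y
      _ ≤ 2 * L * (n * (ε / (2 * n * L))) := by gcongr
      _ = ε := by
          have : (n : ℝ) ≠ 0 := Nat.cast_ne_zero.mpr (Nat.one_le_iff_ne_zero.mp hn)
          field_simp
  exact ⟨⟨hDx, by linarith⟩, by linarith, hDy⟩

/-- Correctness kernel of the reduction from Consensus-Halving to Tucker: with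
`D(z) = v(I⁺(z)) − v(I⁻(z))`, if `‖x − y‖_∞ ≤ ε/(2nL)`, `D(x) ≥ 0` and `D(y) ≤ 0`,
then `0 ≤ D(x) ≤ ε` and `−ε ≤ D(y) ≤ 0`. -/
theorem stmt9 (n : ℕ) (hn : 1 ≤ n) (ε L : ℝ) (hε : 0 < ε) (hL : 0 < L)
    (v : Set ℝ → ℝ) (hv : LipVal L v)
    (x y : Fin n → ℝ) (hx : ∀ ℓ, x ℓ ∈ Icc (-1:ℝ) 1) (hy : ∀ ℓ, y ℓ ∈ Icc (-1:ℝ) 1)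
    (hclose : ‖x - y‖ ≤ ε / (2 * (n : ℝ) * L))
    (hDx : 0 ≤ v (paintPlus n x) - v (Icc (0:ℝ) 1 \ paintPlus n x))
    (hDy : v (paintPlus n y) - v (Icc (0:ℝ) 1 \ paintPlus n y) ≤ 0) :
    (0 ≤ v (paintPlus n x) - v (Icc (0:ℝ) 1 \ paintPlus n x) ∧
      v (paintPlus n x) - v (Icc (0:ℝ) 1 \ paintPlus n x) ≤ ε) ∧
    (-ε ≤ v (paintPlus n y) - v (Icc (0:ℝ) 1 \ paintPlus n y) ∧
      v (paintPlus n y) - v (Icc (0:ℝ) 1 \ paintPlus n y) ≤ 0) :=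
  stmt9_general n hn ε L hL v hv x y hclose hDx hDy
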